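/- Fix a real λ > 0 and x ∈ ℤ. With P(S_n = x) := 2^{−n} · |{ε ∈ {−1,1}^n : ε_1 + ⋯ + ε_n = x}| (simple random walk on ℤ), define for k ∈ ℕ the weights a_k := (λ^k / k!) · P(S_k = x) and b_k := ((λ/2)^k / k!) · 1{k ≡ x (mod 2)}. Then the series A := ∑_{k∈ℕ} a_k and B := ∑_{k∈ℕ} b_k converge and are strictly positive, and for every n ∈ ℕ, (∑_{k ≥ n} b_k) · A ≤ (∑_{k ≥ n} a_k) · B; that is, the probability distribution (b_k/B)_{k∈ℕ} is stochastically dominated by (a_k/A)_{k∈ℕ}. -/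

import Mathlib

/-!
Write `w k = (λ/2)^k / k!`. Then `a k = w k · N(k, x)`, where `N(k, x)` counts the ±1 paths of
length `k` ending at `x`, and `b k = w k · 1{k ≡ x mod 2}`. Since `N(k, x)` vanishes off the parity
class of `x` and is nondecreasing along it (append a step up and a step down), the ratio `a k / b k`
is nondecreasing: `a` dominates `b` in the likelihood-ratio order. Summing the cross inequalities
`b k a j ≤ a k b j` over `j < n ≤ k` gives the tail inequality.
-/

open Finset

/-- `b ≤ a` in the likelihood-ratio order (`a k / b k` nondecreasing), cross-multiplied. -/
def LikelihoodRatioLE (b a : ℕ → ℝ) : Prop :=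
  ∀ ⦃j k : ℕ⦄, j ≤ k → b k * a j ≤ a k * b j

namespace LikelihoodRatioLE

variable {a b : ℕ → ℝ}

theorem mul_left {w : ℕ → ℝ} (h : LikelihoodRatioLE b a) (hw : ∀ k, 0 ≤ w k) :
    LikelihoodRatioLE (fun k => w k * b k) (fun k => w k * a k) := by
  intro j k hjk
  calc w k * b k * (w j * a j) = w k * w j * (b k * a j) := by ring
    _ ≤ w k * w j * (a k * b j) := mul_le_mul_of_nonneg_left (h hjk) (mul_nonneg (hw k) (hw j))
    _ = w k * a k * (w j * b j) := by ring

theorem tsum_nat_add_mul_tsum_le (h : LikelihoodRatioLE b a) (ha : Summable a)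
    (hb : Summable b) (n : ℕ) :
    (∑' k, b (k + n)) * ∑' k, a k ≤ (∑' k, a (k + n)) * ∑' k, b k := by
  rw [← ha.sum_add_tsum_nat_add n, ← hb.sum_add_tsum_nat_add n]
  have head_tail : (∑' k, b (k + n)) * ∑ j ∈ range n, a j ≤
      (∑' k, a (k + n)) * ∑ j ∈ range n, b j := by
    rw [← tsum_mul_right, ← tsum_mul_right]
    refine Summable.tsum_le_tsum (fun k => ?_) (((summable_nat_add_iff n).mpr hb).mul_right _)
      (((summable_nat_add_iff n).mpr ha).mul_right _)
    simp only [mul_sum]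
    exact sum_le_sum fun j hj => h (by have := mem_range.mp hj; omega)
  -- the two `tail * tail` products coincide
  linarith

end LikelihoodRatioLE

def walkCount (n : ℕ) (x : ℤ) : ℕ :=
  (univ.filter (fun ε : Fin n → Bool => ∑ i, (if ε i then (1 : ℤ) else -1) = x)).card

theorem walkCount_le_two_pow (n : ℕ) (x : ℤ) : walkCount n x ≤ 2 ^ n := by
  simpa [walkCount] using card_filter_le (univ : Finset (Fin n → Bool)) _

theorem walkCount_eq_zero_of_emod_two_ne {n : ℕ} {x : ℤ} (h : (n : ℤ) % 2 ≠ x % 2) :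
    walkCount n x = 0 := by
  refine card_eq_zero.mpr (filter_eq_empty_iff.mpr fun ε _ hε => h ?_)
  have step_odd : ∀ i, (if ε i then (1 : ℤ) else -1) % 2 = 1 := fun i => by
    split_ifs <;> decide
  rw [← hε, sum_int_mod]
  simp [step_odd]

theorem walkCount_le_walkCount_add_two (n : ℕ) (x : ℤ) : walkCount n x ≤ walkCount (n + 2) x := by
  refine card_le_card_of_injOn (fun ε => Fin.append ε ![true, false]) (fun ε hε => ?_)
    fun ε₁ _ ε₂ _ h => funext fun i => by simpa using congrFun h (Fin.castAdd 2 i)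
  simp_all [Fin.sum_univ_add]

theorem walkCount_mono {j k : ℕ} (x : ℤ) (hjk : j ≤ k) (hpar : (j : ℤ) % 2 = (k : ℤ) % 2) :
    walkCount j x ≤ walkCount k x := by
  obtain ⟨m, rfl⟩ : ∃ m, k = j + 2 * m := ⟨(k - j) / 2, by omega⟩
  induction m with
  | zero => rfl
  | succ m ih => exact (ih (by omega) (by omega)).trans (walkCount_le_walkCount_add_two _ x)

theorem walkCount_natAbs_pos (x : ℤ) : 0 < walkCount x.natAbs x := by
  refine card_pos.mpr ⟨fun _ => decide (0 ≤ x), mem_filter.mpr ⟨mem_univ _, ?_⟩⟩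
  rcases le_or_gt 0 x with hx | hx
  · simp [hx]
  · simp [hx.not_ge, abs_of_neg hx]

theorem likelihoodRatioLE_parity_walkCount (x : ℤ) :
    LikelihoodRatioLE (fun k => if (k : ℤ) % 2 = x % 2 then 1 else 0)
      (fun k => (walkCount k x : ℝ)) := by
  intro j k hjk
  dsimp only
  split_ifs with hk hj hj
  · simpa using walkCount_mono x hjk (hj.trans hk.symm)
  · simp [walkCount_eq_zero_of_emod_two_ne hj]
  · simp
  · simp

/-- Conclusion of Lemma 3.7 (one-dimensional reformulation): with
`a k = (λ^k/k!) P(S_k = x)` and `b k = ((λ/2)^k/k!) 1{k ≡ x (mod 2)}`,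
the series `A = ∑ a_k` and `B = ∑ b_k` converge and are strictly positive, and
for every `n`, `(∑_{k ≥ n} b_k) A ≤ (∑_{k ≥ n} a_k) B`; that is, the normalized
distribution of `b` is stochastically dominated by that of `a`. -/
theorem lemma_3_7_st (lam : ℝ) (hlam : 0 < lam) (x : ℤ)
    (a b : ℕ → ℝ)
    (ha : ∀ n, a n = lam ^ n / n.factorial *
      (((univ.filter (fun ε : Fin n → Bool =>
        ∑ i, (if ε i then (1 : ℤ) else -1) = x)).card : ℝ) / 2 ^ n))
    (hb : ∀ n, b n = (lam / 2) ^ n / n.factorial *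
      (if (n : ℤ) % 2 = x % 2 then 1 else 0)) :
    Summable a ∧ Summable b ∧ 0 < ∑' k, a k ∧ 0 < ∑' k, b k ∧
      ∀ n : ℕ, (∑' k, b (k + n)) * (∑' k, a k) ≤ (∑' k, a (k + n)) * (∑' k, b k) := by
  set w : ℕ → ℝ := fun n => (lam / 2) ^ n / n.factorial
  have hw : ∀ n, 0 < w n := fun n => by positivity
  have ha_eq : ∀ n, a n = w n * walkCount n x := fun n => by
    rw [ha]; simp only [w, walkCount, div_pow]; ring
  have hb_eq : ∀ n, b n = w n * if (n : ℤ) % 2 = x % 2 then 1 else 0 := hb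
  have ha_le : ∀ n, a n ≤ lam ^ n / n.factorial := fun n => by
    calc a n ≤ w n * 2 ^ n := by
          rw [ha_eq]; gcongr; exact_mod_cast walkCount_le_two_pow n x
      _ = lam ^ n / n.factorial := by
          simp only [w]; field_simp; rw [← mul_pow, div_mul_cancel₀ lam two_ne_zero]
  have hb_le : ∀ n, b n ≤ w n := fun n => by
    rw [hb_eq]; split_ifs <;> simp [(hw n).le]
  have ha_nonneg : ∀ n, 0 ≤ a n := fun n => by rw [ha_eq]; have := hw n; positivity
  have hb_nonneg : ∀ n, 0 ≤ b n := fun n => by rw [hb_eq]; split_ifs <;> simp [(hw n).le]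
  have hsa := (Real.summable_pow_div_factorial lam).of_nonneg_of_le ha_nonneg ha_le
  have hsb := (Real.summable_pow_div_factorial (lam / 2)).of_nonneg_of_le hb_nonneg hb_le
  have hpar : (x.natAbs : ℤ) % 2 = x % 2 := by omega
  refine ⟨hsa, hsb, hsa.tsum_pos ha_nonneg x.natAbs ?_, hsb.tsum_pos hb_nonneg x.natAbs ?_,
    fun n => ?_⟩
  · rw [ha_eq]; exact mul_pos (hw _) (by exact_mod_cast walkCount_natAbs_pos x)
  · rw [hb_eq, if_pos hpar, mul_one]; exact hw _
  · have hlr : LikelihoodRatioLE b a := by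
      rw [funext ha_eq, funext hb_eq]
      exact (likelihoodRatioLE_parity_walkCount x).mul_left fun n => (hw n).le
    exact hlr.tsum_nat_add_mul_tsum_le hsa hsb n
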